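/- arXiv:2405.03112 — 2 statements merged into one kernel-verified Lean document; each statement's English description precedes it below -/
import Mathlib

section
/- Let k ≥ 2, let T be a finite color set, let R be a k-vertex T-edge-colored complete graph, and let H be an n-vertex T-edge-colored complete graph with I(R,H) = I(R,n) (i.e., H maximizes the number of induced copies of R among n-vertex T-edge-colored complete graphs). For v ∈ V(H) let d(v) be the number of k-subsets of V(H) containing v whose induced coloring is isomorphic to R. Then for all x, y ∈ V(H), |d(x) − d(y)| ≤ binom(n−2, k−2). -/
/-!
Make `y` a clone of `x`: every edge `yz` takes the colour of `xz`. Copies of `R` avoiding `y` are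
unchanged, so at most the `d(y)` copies through `y` are lost. Conversely, the transposition of `x`
and `y` turns each copy through `x` avoiding `y` into a copy of the clone through `y`, and at least
`d(x) - C(n-2,k-2)` copies through `x` avoid `y`, since only `C(n-2,k-2)` of the `k`-sets contain
both. By extremality the clone has no more copies than `H`, whence `d(x) ≤ d(y) + C(n-2,k-2)`.
-/

open Finset Filter

open scoped Classical

section Defs

variable {T : Type}

/-- A coloring of the complete graph is symmetric. -/
def IsSym {V : Type} (χ : V → V → T) : Prop := ∀ u v, χ u v = χ v u

/-- `copyCount k n R χ` : the number of `k`-element subsets of `Fin n` whose coloring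
induced by `χ` is isomorphic (as an edge-colored complete graph) to `R`. -/
noncomputable def copyCount (k n : ℕ) (R : Fin k → Fin k → T) (χ : Fin n → Fin n → T) : ℕ :=
  ((Finset.powersetCard k (Finset.univ : Finset (Fin n))).filter
    (fun S => ∃ φ : Fin k → Fin n, Function.Injective φ ∧ (∀ a, φ a ∈ S) ∧
      ∀ a b : Fin k, a ≠ b → χ (φ a) (φ b) = R a b)).card

/-- `maxCopyCount k n R = I(R,n)` : the maximum of `copyCount` over all symmetric
`T`-colorings of the complete graph on `n` vertices. -/
noncomputable def maxCopyCount [Fintype T] (k n : ℕ) (R : Fin k → Fin k → T) : ℕ :=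
  Finset.sup ((Finset.univ : Finset (Fin n → Fin n → T)).filter (fun χ => IsSym χ))
    (fun χ => copyCount k n R χ)

/-- `vertDeg k n R χ x = d(x)` : the number of `k`-subsets containing `x` whose induced
coloring is isomorphic to `R`. -/
noncomputable def vertDeg (k n : ℕ) (R : Fin k → Fin k → T) (χ : Fin n → Fin n → T)
    (x : Fin n) : ℕ :=
  ((Finset.powersetCard k (Finset.univ : Finset (Fin n))).filter
    (fun S => x ∈ S ∧ ∃ φ : Fin k → Fin n, Function.Injective φ ∧ (∀ a, φ a ∈ S) ∧
      ∀ a b : Fin k, a ≠ b → χ (φ a) (φ b) = R a b)).card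

/-- `embCount k n R χ i x = d_i(x)` : the number of injective color-preserving maps
`φ : Fin k → Fin n` with `φ i = x`. -/
noncomputable def embCount (k n : ℕ) (R : Fin k → Fin k → T) (χ : Fin n → Fin n → T)
    (i : Fin k) (x : Fin n) : ℕ :=
  ((Finset.univ : Finset (Fin k → Fin n)).filter
    (fun φ => Function.Injective φ ∧ φ i = x ∧
      ∀ a b : Fin k, a ≠ b → χ (φ a) (φ b) = R a b)).card

/-- `Nset k n R χ i x = N_i(x)` : the set of vertices `y ≠ x` lying in the image of some
injective color-preserving map `φ : Fin k → Fin n` with `φ i = x`. -/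
noncomputable def Nset (k n : ℕ) (R : Fin k → Fin k → T) (χ : Fin n → Fin n → T)
    (i : Fin k) (x : Fin n) : Finset (Fin n) :=
  (Finset.univ : Finset (Fin n)).filter
    (fun y => y ≠ x ∧ ∃ φ : Fin k → Fin n, Function.Injective φ ∧ φ i = x ∧
      (∀ a b : Fin k, a ≠ b → χ (φ a) (φ b) = R a b) ∧ ∃ a, φ a = y)

/-- `colorDeg χ x c = d_c(x)` : the number of vertices `y ≠ x` with `χ x y = c`. -/
noncomputable def colorDeg {n : ℕ} (χ : Fin n → Fin n → T) (x : Fin n) (c : T) : ℕ :=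
  ((Finset.univ : Finset (Fin n)).filter (fun y => y ≠ x ∧ χ x y = c)).card

end Defs

/-- The rainbow `k`-clique: the edge `ij` gets color `{i,j}`. -/
def rainbowClique (k : ℕ) : Fin k → Fin k → Finset (Fin k) := fun i j => {i, j}

/-- A rainbow graph `G` on `[k]`, viewed as an edge-colored complete graph: edges `ij ∈ E`
get color `{i,j}`, non-edges get color `∅`. -/
noncomputable def rainbowOf {k : ℕ} (G : SimpleGraph (Fin k)) :
    Fin k → Fin k → Finset (Fin k) :=
  fun i j => if G.Adj i j then {i, j} else ∅

/-- `B(x)` : the set of neighbors of `x`, i.e. vertices joined to `x` by a non-`∅` color. -/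
noncomputable def Bset {k n : ℕ} (χ : Fin n → Fin n → Finset (Fin k)) (x : Fin n) :
    Finset (Fin n) :=
  (Finset.univ : Finset (Fin n)).filter (fun y => y ≠ x ∧ χ x y ≠ ∅)

/-- The degree of vertex `i` in the graph `G`. -/
noncomputable def degR {k : ℕ} (G : SimpleGraph (Fin k)) (i : Fin k) : ℕ :=
  ((Finset.univ : Finset (Fin k)).filter (fun j => G.Adj i j)).card

section Copies

variable {T : Type} {k : ℕ} (R : Fin k → Fin k → T)

def IsCopy {V : Type} (ψ : V → V → T) (S : Finset V) : Prop :=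
  ∃ φ : Fin k → V, Function.Injective φ ∧ (∀ a, φ a ∈ S) ∧
    ∀ a b : Fin k, a ≠ b → ψ (φ a) (φ b) = R a b

variable {R}

theorem IsCopy.image {V W : Type} [DecidableEq W] {ψ : V → V → T} {ψ' : W → W → T}
    {S : Finset V} (hS : IsCopy R ψ S) {g : V → W} (hg : Function.Injective g)
    (hψ : ∀ u ∈ S, ∀ v ∈ S, ψ' (g u) (g v) = ψ u v) : IsCopy R ψ' (S.image g) := by
  obtain ⟨φ, hφ, hmem, hcol⟩ := hS
  exact ⟨g ∘ φ, hg.comp hφ, fun a => mem_image_of_mem g (hmem a),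
    fun a b hab => (hψ _ (hmem a) _ (hmem b)).trans (hcol a b hab)⟩

variable (k) (R)

noncomputable def copies {n : ℕ} (χ : Fin n → Fin n → T) : Finset (Finset (Fin n)) :=
  {S ∈ powersetCard k univ | IsCopy R χ S}

variable {n : ℕ} {χ : Fin n → Fin n → T}

theorem copyCount_eq_card_copies : copyCount k n R χ = #(copies k R χ) :=
  congrArg card (filter_congr fun _ _ => Iff.rfl)

theorem vertDeg_eq_card_filter_copies (x : Fin n) :
    vertDeg k n R χ x = #{S ∈ copies k R χ | x ∈ S} := by
  rw [copies, filter_filter]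
  exact congrArg card (filter_congr fun S _ => and_comm)

theorem copyCount_le_maxCopyCount [Fintype T] (hχ : IsSym χ) :
    copyCount k n R χ ≤ maxCopyCount k n R :=
  le_sup (f := fun ψ => copyCount k n R ψ) (mem_filter.mpr ⟨mem_univ _, hχ⟩)

end Copies

section Clone

variable {V T : Type} [DecidableEq V] {χ : V → V → T} {x y u v : V}

/-- `y` becomes a twin of `x`. The edge `xy` gets the colour `χ x x`, which plays no role. -/
def cloneColoring (χ : V → V → T) (x y : V) : V → V → T :=
  fun u v => χ (Function.update id y x u) (Function.update id y x v)

theorem IsSym.cloneColoring (hχ : IsSym χ) : IsSym (cloneColoring χ x y) :=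
  fun _ _ => hχ _ _

theorem update_id_swap_apply_of_ne (hu : u ≠ y) :
    Function.update id y x (Equiv.swap x y u) = u := by
  by_cases hux : u = x
  · subst hux
    simp
  · rw [Equiv.swap_apply_of_ne_of_ne hux hu, Function.update_of_ne hu, id]

theorem cloneColoring_apply_of_ne (hu : u ≠ y) (hv : v ≠ y) :
    cloneColoring χ x y u v = χ u v := by
  simp only [cloneColoring, Function.update_of_ne hu, Function.update_of_ne hv, id]

theorem cloneColoring_swap_apply_of_ne (hu : u ≠ y) (hv : v ≠ y) :
    cloneColoring χ x y (Equiv.swap x y u) (Equiv.swap x y v) = χ u v := by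
  simp only [cloneColoring, update_id_swap_apply_of_ne hu, update_id_swap_apply_of_ne hv]

variable {k : ℕ} {R : Fin k → Fin k → T} {S : Finset V}

theorem IsCopy.cloneColoring_of_notMem (hS : IsCopy R χ S) (hy : y ∉ S) :
    IsCopy R (cloneColoring χ x y) S := by
  simpa only [image_id] using hS.image Function.injective_id fun _ hu _ hv =>
    cloneColoring_apply_of_ne (ne_of_mem_of_not_mem hu hy) (ne_of_mem_of_not_mem hv hy)

theorem IsCopy.cloneColoring_image_swap (hS : IsCopy R χ S) (hy : y ∉ S) :
    IsCopy R (cloneColoring χ x y) (S.image (Equiv.swap x y)) :=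
  hS.image (Equiv.swap x y).injective fun _ hu _ hv =>
    cloneColoring_swap_apply_of_ne (ne_of_mem_of_not_mem hu hy) (ne_of_mem_of_not_mem hv hy)

end Clone

section Counting

variable {T : Type} {k n : ℕ} {R : Fin k → Fin k → T} {χ : Fin n → Fin n → T} {x y : Fin n}

theorem card_filter_copies_mem_pair_le (hk : 2 ≤ k) (hxy : x ≠ y) :
    #{S ∈ copies k R χ | x ∈ S ∧ y ∈ S} ≤ (n - 2).choose (k - 2) :=
  calc #{S ∈ copies k R χ | x ∈ S ∧ y ∈ S}
      ≤ #{S ∈ powersetCard k univ | {x, y} ⊆ S} := by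
        refine card_le_card fun S hS => ?_
        simp only [copies, mem_filter] at hS ⊢
        exact ⟨hS.1.1, insert_subset hS.2.1 (singleton_subset_iff.mpr hS.2.2)⟩
    _ = (n - 2).choose (k - 2) := by
        rw [card_filter_powersetCard_subset _ _ _ (subset_univ _) (by rwa [card_pair hxy]),
          card_univ, Fintype.card_fin, card_pair hxy]

theorem card_filter_copies_le_cloneColoring_notMem :
    #{S ∈ copies k R χ | y ∉ S} ≤ #{S ∈ copies k R (cloneColoring χ x y) | y ∉ S} := by
  refine card_le_card fun S hS => ?_
  simp only [copies, mem_filter] at hS ⊢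
  exact ⟨⟨hS.1.1, hS.1.2.cloneColoring_of_notMem hS.2⟩, hS.2⟩

theorem card_filter_copies_le_cloneColoring_mem :
    #{S ∈ copies k R χ | x ∈ S ∧ y ∉ S} ≤ #{S ∈ copies k R (cloneColoring χ x y) | y ∈ S} := by
  refine card_le_card_of_injOn (·.image (Equiv.swap x y)) (fun S hS => ?_)
    (image_injective (Equiv.swap x y).injective).injOn
  simp only [copies, mem_coe, mem_filter, mem_powersetCard] at hS ⊢
  refine ⟨⟨⟨subset_univ _, ?_⟩, hS.1.2.cloneColoring_image_swap hS.2.2⟩, ?_⟩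
  · rw [card_image_of_injective _ (Equiv.swap x y).injective, hS.1.1.2]
  · exact mem_image.mpr ⟨x, hS.2.1, Equiv.swap_apply_left x y⟩

theorem copyCount_add_vertDeg_le_cloneColoring (hk : 2 ≤ k) (hxy : x ≠ y) :
    copyCount k n R χ + vertDeg k n R χ x ≤
      copyCount k n R (cloneColoring χ x y) + vertDeg k n R χ y + (n - 2).choose (k - 2) := by
  have hsplit := card_filter_add_card_filter_not (s := copies k R χ) (fun S => y ∈ S)
  have hsplit' := card_filter_add_card_filter_not (s := copies k R (cloneColoring χ x y))
    (fun S => y ∈ S)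
  have hsplit_x :=
    card_filter_add_card_filter_not (s := {S ∈ copies k R χ | x ∈ S}) (fun S => y ∈ S)
  rw [filter_filter, filter_filter] at hsplit_x
  have hpair := card_filter_copies_mem_pair_le (R := R) (χ := χ) hk hxy
  have hkept := card_filter_copies_le_cloneColoring_notMem (R := R) (χ := χ) (x := x) (y := y)
  have hmoved := card_filter_copies_le_cloneColoring_mem (R := R) (χ := χ) (x := x) (y := y)
  rw [copyCount_eq_card_copies, copyCount_eq_card_copies, vertDeg_eq_card_filter_copies,
    vertDeg_eq_card_filter_copies]
  omega

end Counting

theorem vertDeg_le_vertDeg_add_of_copyCount_eq_max {T : Type} [Fintype T] {k n : ℕ}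
    (hk : 2 ≤ k) {R : Fin k → Fin k → T} {χ : Fin n → Fin n → T} (hχ : IsSym χ)
    (hmax : copyCount k n R χ = maxCopyCount k n R) {x y : Fin n} (hxy : x ≠ y) :
    vertDeg k n R χ x ≤ vertDeg k n R χ y + (n - 2).choose (k - 2) := by
  have hclone := copyCount_add_vertDeg_le_cloneColoring (R := R) (χ := χ) hk hxy
  have hle := copyCount_le_maxCopyCount k R (hχ.cloneColoring (x := x) (y := y))
  omega

theorem extremal_degrees_close_general {T : Type} [Fintype T] (k n : ℕ) (hk : 2 ≤ k)
    (R : Fin k → Fin k → T)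
    (χ : Fin n → Fin n → T) (hχ : IsSym χ)
    (hmax : copyCount k n R χ = maxCopyCount k n R) :
    ∀ x y : Fin n,
      |(vertDeg k n R χ x : ℤ) - (vertDeg k n R χ y : ℤ)| ≤ ((n - 2).choose (k - 2) : ℤ) := by
  intro x y
  rcases eq_or_ne x y with rfl | hxy
  · simp
  · have hxy_le := vertDeg_le_vertDeg_add_of_copyCount_eq_max hk hχ hmax hxy
    have hyx_le := vertDeg_le_vertDeg_add_of_copyCount_eq_max hk hχ hmax hxy.symm
    rw [abs_sub_le_iff]
    omega

/-- In an extremal `n`-vertex colored complete graph `H` (one with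
`I(R,H) = I(R,n)`), any two vertex degrees `d(x), d(y)` differ by at most `binom(n−2,k−2)`. -/
theorem extremal_degrees_close {T : Type} [Fintype T] (k n : ℕ) (hk : 2 ≤ k)
    (R : Fin k → Fin k → T) (hR : IsSym R)
    (χ : Fin n → Fin n → T) (hχ : IsSym χ)
    (hmax : copyCount k n R χ = maxCopyCount k n R) :
    ∀ x y : Fin n,
      |(vertDeg k n R χ x : ℤ) - (vertDeg k n R χ y : ℤ)| ≤ ((n - 2).choose (k - 2) : ℤ) :=
  extremal_degrees_close_general k n hk R χ hχ hmax
end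

section
/- Let k ≥ 11, let R be the rainbow k-clique, and let H be an n-vertex T-edge-colored complete graph such that every vertex x ∈ V(H) satisfies d(x) ≥ n^{k−1}/(k^{k−1}−1). Then for every x ∈ V(H) and every pair of distinct indices i, j ∈ [k], min(|N_i(x)|, |N_j(x)|) ≤ n/2; equivalently, the second largest among |N_1(x)|, …, |N_k(x)| is at most n/2. -/
open Finset Filter

open scoped Classical

/-!
Fix `x` and `i ≠ j`, write `d c` for the number of `y` with `χ x y = c`, and let `s = [k] \ {i, j}`.
Distinct colours split the neighbours of `x`, so `u + A + B + t ≤ n` for `u = d {i, j}`,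
`A = ∑_{a ∈ s} d {i, a}`, `B = ∑_{a ∈ s} d {j, a}` and `t` the sum of `d` over the pairs inside `s`;
moreover `|N_i(x)| ≤ u + A` and `|N_j(x)| ≤ u + B`. Every copy of `R` through `x` is counted by some
`d_m(x) ≤ ∏_{a ≠ m} d {m, a}`, so AM-GM gives
`d(x) ≤ u ((A/(k-2))^(k-2) + (B/(k-2))^(k-2)) + A B (t/(k-3))^(k-3)`.
If both neighbourhoods exceed `n/2`, then `A, B ≤ n/2 - t`; a second AM-GM and `(1 + c/m)^m ≤ e^c`
bound each of the two terms by `n^(k-1) / (2 k^(k-1))`, contradicting the lower bound on `d(x)`.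
-/

section Counting

variable {T : Type} {k n : ℕ} (R : Fin k → Fin k → T) (χ : Fin n → Fin n → T) (x : Fin n)

lemma sum_colorDeg_le (C : Finset T) : ∑ c ∈ C, colorDeg χ x c ≤ n := by
  calc ∑ c ∈ C, colorDeg χ x c = #{y ∈ univ.filter (· ≠ x) | χ x y ∈ C} := by
        simp only [colorDeg, ← filter_filter]
        convert sum_card_fiberwise_eq_card_filter _ _ _
    _ ≤ n := (card_le_univ _).trans_eq (Fintype.card_fin n)

lemma vertDeg_le_sum_embCount : vertDeg k n R χ x ≤ ∑ m, embCount k n R χ m x := by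
  refine (card_le_card_of_surjOn (fun φ => univ.image φ) ?_).trans card_biUnion_le
  intro S hS
  simp only [coe_filter, mem_powersetCard, Set.mem_ofPred_eq] at hS
  obtain ⟨⟨-, hcard⟩, hxS, φ, hinj, hφS, hcol⟩ := hS
  have himage : univ.image φ = S :=
    eq_of_subset_of_card_le (by simpa [subset_iff] using hφS)
      (by rw [card_image_of_injective _ hinj, card_univ, Fintype.card_fin, hcard])
  obtain ⟨m, -, hm⟩ := mem_image.1 (himage ▸ hxS)
  exact ⟨φ, by simpa [embCount] using ⟨hinj, ⟨m, hm⟩, hcol⟩, himage⟩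

lemma embCount_le_prod_colorDeg (m : Fin k) :
    embCount k n R χ m x ≤ ∏ a ∈ univ.erase m, colorDeg χ x (R m a) := by
  simp only [embCount, colorDeg]
  rw [← card_pi]
  refine card_le_card_of_injOn (fun φ a _ => φ a) ?_ ?_
  · intro φ hφ
    simp only [coe_filter, Set.mem_ofPred_eq, mem_univ, true_and] at hφ
    obtain ⟨hinj, rfl, hcol⟩ := hφ
    refine mem_coe.2 (mem_pi.2 fun a ha => ?_)
    have ham := ne_of_mem_erase ha
    exact mem_filter.2 ⟨mem_univ _, hinj.ne ham, hcol m a ham.symm⟩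
  · intro φ hφ ψ hψ hφψ
    simp only [coe_filter, Set.mem_ofPred_eq, mem_univ, true_and] at hφ hψ
    funext a
    by_cases ham : a = m
    · rw [ham, hφ.2.1, hψ.2.1]
    · exact congr_fun₂ hφψ a (mem_erase.2 ⟨ham, mem_univ a⟩)

lemma card_Nset_le_sum_colorDeg (i : Fin k) :
    #(Nset k n R χ i x) ≤ ∑ a ∈ univ.erase i, colorDeg χ x (R i a) := by
  refine (card_le_card fun y hy => ?_).trans card_biUnion_le
  simp only [Nset, mem_filter, mem_univ, true_and] at hy
  obtain ⟨hyx, φ, -, rfl, hcol, a, rfl⟩ := hy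
  have hai : a ≠ i := fun h => hyx (h ▸ rfl)
  simp only [mem_biUnion, mem_erase, mem_univ, and_true, mem_filter, true_and]
  exact ⟨a, hai, hyx, hcol i a hai.symm⟩

end Counting

lemma sum_powersetCard_two_insert {α M : Type*} [DecidableEq α] [AddCommMonoid M] {a : α}
    {s : Finset α} (ha : a ∉ s) (f : Finset α → M) :
    ∑ p ∈ powersetCard 2 (insert a s), f p = ∑ p ∈ powersetCard 2 s, f p + ∑ b ∈ s, f {a, b} := by
  have hdisj : Disjoint (powersetCard 2 s) ((powersetCard 1 s).image (insert a)) := by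
    simp only [disjoint_left, mem_powersetCard, mem_image]
    rintro _ ⟨hps, -⟩ ⟨q, -, rfl⟩
    exact ha (hps (mem_insert_self a q))
  have hinj : Set.InjOn (insert a) (powersetCard 1 s : Set (Finset α)) := by
    simp only [powersetCard_one, coe_map, Set.InjOn, Set.mem_image, mem_coe]
    rintro _ ⟨b, hb, rfl⟩ _ ⟨c, hc, rfl⟩ hbc
    have : b ∈ ({a, c} : Finset α) := hbc ▸ mem_insert_of_mem (mem_singleton_self b)
    simp only [mem_insert, mem_singleton] at this
    rcases this with rfl | rfl
    · exact absurd hb ha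
    · rfl
  rw [powersetCard_succ_insert ha, sum_union hdisj, sum_image hinj, powersetCard_one, sum_map]
  rfl

section Rainbow

variable {k n : ℕ} (χ : Fin n → Fin n → Finset (Fin k)) (x : Fin n) {i j : Fin k}

lemma univ_erase_eq_insert_sdiff_pair (hij : i ≠ j) :
    (univ : Finset (Fin k)).erase i = insert j (univ \ {i, j}) := by
  ext a
  simp only [mem_erase, mem_insert, mem_univ]
  grind

lemma univ_eq_insert_insert_sdiff_pair (hij : i ≠ j) :
    (univ : Finset (Fin k)) = insert i (insert j (univ \ {i, j})) := by
  rw [← univ_erase_eq_insert_sdiff_pair hij, insert_erase (mem_univ i)]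

lemma sum_colorDeg_rainbow_le (hij : i ≠ j) :
    colorDeg χ x {i, j} + ∑ a ∈ univ \ {i, j}, colorDeg χ x {i, a}
      + ∑ a ∈ univ \ {i, j}, colorDeg χ x {j, a}
      + ∑ p ∈ powersetCard 2 (univ \ {i, j}), colorDeg χ x p ≤ n := by
  have := sum_colorDeg_le χ x (powersetCard 2 univ)
  rw [univ_eq_insert_insert_sdiff_pair hij, sum_powersetCard_two_insert,
    sum_powersetCard_two_insert, sum_insert] at this
  · omega
  all_goals simp [hij]

lemma card_Nset_rainbow_le (hij : i ≠ j) :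
    #(Nset k n (rainbowClique k) χ i x)
      ≤ colorDeg χ x {i, j} + ∑ a ∈ univ \ {i, j}, colorDeg χ x {i, a} := by
  have := card_Nset_le_sum_colorDeg (rainbowClique k) χ x i
  rwa [univ_erase_eq_insert_sdiff_pair hij, sum_insert (by simp)] at this

lemma embCount_rainbow_le (hij : i ≠ j) :
    embCount k n (rainbowClique k) χ i x
      ≤ colorDeg χ x {i, j} * ∏ a ∈ univ \ {i, j}, colorDeg χ x {i, a} := by
  have := embCount_le_prod_colorDeg (rainbowClique k) χ x i
  rwa [univ_erase_eq_insert_sdiff_pair hij, prod_insert (by simp)] at this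

lemma embCount_rainbow_le_of_mem (hij : i ≠ j) {m : Fin k} (hm : m ∈ univ \ {i, j}) :
    embCount k n (rainbowClique k) χ m x ≤ colorDeg χ x {m, i} * colorDeg χ x {m, j}
      * ∏ a ∈ (univ \ {i, j}).erase m, colorDeg χ x {m, a} := by
  have hsplit :
      (univ : Finset (Fin k)).erase m = insert i (insert j ((univ \ {i, j}).erase m)) := by
    ext a
    simp only [mem_insert, mem_univ, mem_erase]
    grind
  have := embCount_le_prod_colorDeg (rainbowClique k) χ x m
  rwa [hsplit, prod_insert (by simp [hij]), prod_insert (by simp), ← mul_assoc] at this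

end Rainbow

lemma prod_pow_le_weighted_mean_pow {ι : Type*} (s : Finset ι) (w : ι → ℕ) (z : ι → ℝ)
    (hz : ∀ i ∈ s, 0 ≤ z i) :
    ∏ i ∈ s, z i ^ w i ≤ ((∑ i ∈ s, w i * z i) / ∑ i ∈ s, w i) ^ ∑ i ∈ s, w i := by
  rcases Nat.eq_zero_or_pos (∑ i ∈ s, w i) with hW | hW
  · rw [hW, pow_zero]
    exact (prod_eq_one fun i hi => by rw [sum_eq_zero_iff.1 hW i hi, pow_zero]).le
  have hW' : (0 : ℝ) < ∑ i ∈ s, (w i : ℝ) := by exact_mod_cast hW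
  have hamgm := Real.geom_mean_le_arith_mean s (fun i => (w i : ℝ)) z (fun _ _ => by positivity)
    hW' hz
  have hprod : 0 ≤ ∏ i ∈ s, z i ^ (w i : ℝ) :=
    prod_nonneg fun i hi => Real.rpow_nonneg (hz i hi) _
  have := pow_le_pow_left₀ (Real.rpow_nonneg hprod _) hamgm (∑ i ∈ s, w i)
  rw [← Real.rpow_natCast, ← Real.rpow_mul hprod, Nat.cast_sum,
    inv_mul_cancel₀ hW'.ne', Real.rpow_one, prod_congr rfl fun i _ => Real.rpow_natCast _ _] at this
  rwa [Nat.cast_sum]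

lemma prod_le_mean_pow {ι : Type*} (s : Finset ι) (z : ι → ℝ) (hz : ∀ i ∈ s, 0 ≤ z i) :
    ∏ i ∈ s, z i ≤ ((∑ i ∈ s, z i) / #s) ^ #s := by
  simpa using prod_pow_le_weighted_mean_pow s (fun _ => 1) z hz

lemma sq_mul_pow_le (r : ℕ) {a b : ℝ} (ha : 0 ≤ a) (hb : 0 ≤ b) :
    a ^ 2 * b ^ r ≤ ((2 * a + r * b) / (r + 2)) ^ (r + 2) := by
  have := prod_pow_le_weighted_mean_pow univ ![2, r] ![a, b] (by simp [Fin.forall_fin_two, ha, hb])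
  simp only [Fin.prod_univ_two, Fin.sum_univ_two] at this
  convert this using 2 <;> simp [add_comm]

lemma add_pow_le_exp_mul_pow (m : ℕ) {c : ℝ} (hc : 0 ≤ c) :
    ((m : ℝ) + c) ^ m ≤ Real.exp c * (m : ℝ) ^ m := by
  rcases Nat.eq_zero_or_pos m with rfl | hm
  · simpa using Real.one_le_exp hc
  have hm' : (0 : ℝ) < m := by exact_mod_cast hm
  calc ((m : ℝ) + c) ^ m = (1 + c / m) ^ m * (m : ℝ) ^ m := by
        rw [← mul_pow, add_mul, div_mul_cancel₀ _ hm'.ne', one_mul]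
    _ ≤ Real.exp (c / m) ^ m * (m : ℝ) ^ m := by
        gcongr
        linarith [Real.add_one_le_exp (c / m)]
    _ = Real.exp c * (m : ℝ) ^ m := by
        rw [← Real.exp_nat_mul, mul_div_cancel₀ _ hm'.ne']

lemma four_mul_add_three_pow_le {K : ℕ} (hK : 8 ≤ K) :
    4 * ((K : ℝ) + 3) ^ (K + 2) ≤ (2 * ((K : ℝ) + 1)) ^ (K + 1) := by
  have hpow : 32 * ((K : ℝ) + 3) ≤ 2 ^ (K + 1) := by
    have : 32 * (K + 3) ≤ 2 ^ (K + 1) := by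
      induction K, hK using Nat.le_induction with
      | base => norm_num
      | succ K _ ih => rw [pow_succ]; linarith
    exact_mod_cast this
  have hexp : ((K : ℝ) + 3) ^ (K + 1) ≤ 8 * ((K : ℝ) + 1) ^ (K + 1) := by
    have h := add_pow_le_exp_mul_pow (K + 1) (c := 2) zero_le_two
    have he : Real.exp 2 ≤ 8 := by
      rw [show (2 : ℝ) = (2 : ℕ) by norm_num, ← Real.exp_one_pow]
      nlinarith [Real.exp_one_lt_d9, Real.exp_pos 1]
    push_cast at h
    calc ((K : ℝ) + 3) ^ (K + 1) = ((K : ℝ) + 1 + 2) ^ (K + 1) := by ring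
      _ ≤ 8 * ((K : ℝ) + 1) ^ (K + 1) := h.trans (by gcongr)
  calc 4 * ((K : ℝ) + 3) ^ (K + 2) = 4 * ((K : ℝ) + 3) * ((K : ℝ) + 3) ^ (K + 1) := by ring
    _ ≤ 4 * ((K : ℝ) + 3) * (8 * ((K : ℝ) + 1) ^ (K + 1)) := by gcongr
    _ = 32 * ((K : ℝ) + 3) * ((K : ℝ) + 1) ^ (K + 1) := by ring
    _ ≤ 2 ^ (K + 1) * ((K : ℝ) + 1) ^ (K + 1) := by gcongr
    _ = (2 * ((K : ℝ) + 1)) ^ (K + 1) := (mul_pow _ _ _).symm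

lemma eight_mul_add_three_pow_le {K : ℕ} (hK : 3 ≤ K) :
    8 * ((K : ℝ) + 3) ^ (K + 2) ≤ (2 * ((K : ℝ) + 2)) ^ (K + 2) := by
  have hexp : ((K : ℝ) + 3) ^ (K + 2) ≤ 3 * ((K : ℝ) + 2) ^ (K + 2) := by
    have h := add_pow_le_exp_mul_pow (K + 2) (c := 1) zero_le_one
    push_cast at h
    calc ((K : ℝ) + 3) ^ (K + 2) = ((K : ℝ) + 2 + 1) ^ (K + 2) := by ring
      _ ≤ 3 * ((K : ℝ) + 2) ^ (K + 2) := h.trans (by gcongr; exact Real.exp_one_lt_three.le)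
  have hpow : (24 : ℝ) ≤ 2 ^ (K + 2) :=
    calc (24 : ℝ) ≤ 2 ^ 5 := by norm_num
      _ ≤ 2 ^ (K + 2) := pow_le_pow_right₀ one_le_two (by omega)
  calc 8 * ((K : ℝ) + 3) ^ (K + 2) ≤ 8 * (3 * ((K : ℝ) + 2) ^ (K + 2)) := by gcongr
    _ = 24 * ((K : ℝ) + 2) ^ (K + 2) := by ring
    _ ≤ 2 ^ (K + 2) * ((K : ℝ) + 2) ^ (K + 2) := by gcongr
    _ = (2 * ((K : ℝ) + 2)) ^ (K + 2) := (mul_pow _ _ _).symm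

lemma mul_add_div_pow_le {K : ℕ} (hK : 8 ≤ K) {n u A B : ℝ} (hu : 0 ≤ u) (hun : u ≤ n)
    (hA : 0 ≤ A) (hAn : A ≤ n / 2) (hB : 0 ≤ B) (hBn : B ≤ n / 2) :
    u * ((A / (K + 1)) ^ (K + 1) + (B / (K + 1)) ^ (K + 1))
      ≤ n ^ (K + 2) / (2 * ((K : ℝ) + 3) ^ (K + 2)) := by
  have hn : 0 ≤ n := hu.trans hun
  have hkey := four_mul_add_three_pow_le hK
  calc u * ((A / (K + 1)) ^ (K + 1) + (B / (K + 1)) ^ (K + 1))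
      ≤ n * ((n / 2 / (K + 1)) ^ (K + 1) + (n / 2 / (K + 1)) ^ (K + 1)) := by gcongr
    _ = 2 * n ^ (K + 2) / (2 * ((K : ℝ) + 1)) ^ (K + 1) := by
        rw [div_div, ← two_mul, div_pow, pow_succ n (K + 1)]
        ring
    _ ≤ n ^ (K + 2) / (2 * ((K : ℝ) + 3) ^ (K + 2)) := by
        rw [div_le_div_iff₀ (by positivity) (by positivity)]
        nlinarith [pow_nonneg hn (K + 2)]

lemma mul_mul_div_pow_le {K : ℕ} (hK : 3 ≤ K) {n A B t : ℝ} (hB : 0 ≤ B)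
    (ht : 0 ≤ t) (hAt : A + t ≤ n / 2) (hBt : B + t ≤ n / 2) :
    A * B * (t / K) ^ K ≤ n ^ (K + 2) / (2 * ((K : ℝ) + 3) ^ (K + 2)) := by
  set X := n / 2 - t with hXdef
  have hX : 0 ≤ X := by linarith
  have hn : 0 ≤ n := by linarith
  have hkey := eight_mul_add_three_pow_le hK
  calc A * B * (t / K) ^ K ≤ X ^ 2 * (t / K) ^ K := by
        gcongr
        nlinarith [mul_le_mul (by linarith : A ≤ X) (by linarith : B ≤ X) hB hX]
    _ = ((K * X / 2) ^ 2 * t ^ K) * (4 / (K : ℝ) ^ (K + 2)) := by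
        rw [div_pow, pow_add]
        field_simp
        norm_num
    _ ≤ ((2 * (K * X / 2) + K * t) / (K + 2)) ^ (K + 2) * (4 / (K : ℝ) ^ (K + 2)) := by
        -- AM-GM for two copies of `K X / 2` and `K` copies of `t`, whose sum is `K n / 2`
        gcongr
        exact sq_mul_pow_le K (by positivity) ht
    _ = 4 * n ^ (K + 2) / (2 * ((K : ℝ) + 2)) ^ (K + 2) := by
        rw [show 2 * (K * X / 2) + K * t = (K : ℝ) * n / 2 by rw [hXdef]; ring, div_div,
          div_pow, mul_pow, mul_comm 2 ((K : ℝ) + 2)]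
        field_simp
    _ ≤ n ^ (K + 2) / (2 * ((K : ℝ) + 3) ^ (K + 2)) := by
        rw [div_le_div_iff₀ (by positivity) (by positivity)]
        nlinarith [pow_nonneg hn (K + 2)]

lemma rainbow_estimate_lt {K : ℕ} (hK : 8 ≤ K) {n u A B t : ℝ} (hu : 0 ≤ u) (hA : 0 ≤ A)
    (hB : 0 ≤ B) (ht : 0 ≤ t) (hbudget : u + A + B + t ≤ n) (huA : n / 2 < u + A)
    (huB : n / 2 < u + B) :
    u * ((A / (K + 1)) ^ (K + 1) + (B / (K + 1)) ^ (K + 1)) + A * B * (t / K) ^ K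
      < n ^ (K + 2) / (((K : ℝ) + 3) ^ (K + 2) - 1) := by
  have hn : 0 < n := by linarith
  have hbig : 1 < ((K : ℝ) + 3) ^ (K + 2) := one_lt_pow₀ (by linarith) (by omega)
  calc u * ((A / (K + 1)) ^ (K + 1) + (B / (K + 1)) ^ (K + 1)) + A * B * (t / K) ^ K
      ≤ n ^ (K + 2) / (2 * ((K : ℝ) + 3) ^ (K + 2))
        + n ^ (K + 2) / (2 * ((K : ℝ) + 3) ^ (K + 2)) :=
        add_le_add (mul_add_div_pow_le hK hu (by linarith) hA (by linarith) hB (by linarith))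
          (mul_mul_div_pow_le (by omega) hB ht (by linarith) (by linarith))
    _ = n ^ (K + 2) / ((K : ℝ) + 3) ^ (K + 2) := by field_simp; ring
    _ < n ^ (K + 2) / (((K : ℝ) + 3) ^ (K + 2) - 1) :=
        div_lt_div_of_pos_left (by positivity) (by linarith) (by linarith)

section RainbowEstimates

variable {K n : ℕ} (χ : Fin n → Fin n → Finset (Fin (K + 3))) (x : Fin n) {i j : Fin (K + 3)}

lemma card_univ_sdiff_pair (hij : i ≠ j) : #(univ \ {i, j} : Finset (Fin (K + 3))) = K + 1 := by
  rw [card_sdiff_of_subset (subset_univ _), card_univ, Fintype.card_fin, card_pair hij]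
  rfl

lemma embCount_rainbow_le_mean_pow (hij : i ≠ j) :
    (embCount (K + 3) n (rainbowClique (K + 3)) χ i x : ℝ) ≤ colorDeg χ x {i, j}
      * ((∑ a ∈ univ \ {i, j}, (colorDeg χ x {i, a} : ℝ)) / (K + 1)) ^ (K + 1) := by
  have hamgm := prod_le_mean_pow (univ \ {i, j}) (fun a => (colorDeg χ x {i, a} : ℝ))
    fun _ _ => Nat.cast_nonneg _
  rw [card_univ_sdiff_pair hij] at hamgm
  push_cast at hamgm
  calc (embCount (K + 3) n (rainbowClique (K + 3)) χ i x : ℝ)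
      ≤ colorDeg χ x {i, j} * ∏ a ∈ univ \ {i, j}, (colorDeg χ x {i, a} : ℝ) := by
        exact_mod_cast embCount_rainbow_le χ x hij
    _ ≤ _ := by gcongr

lemma sum_embCount_rainbow_le (hij : i ≠ j) :
    ∑ m ∈ univ \ {i, j}, (embCount (K + 3) n (rainbowClique (K + 3)) χ m x : ℝ)
      ≤ (∑ a ∈ univ \ {i, j}, (colorDeg χ x {i, a} : ℝ))
        * (∑ a ∈ univ \ {i, j}, (colorDeg χ x {j, a} : ℝ))
        * ((∑ p ∈ powersetCard 2 (univ \ {i, j}), (colorDeg χ x p : ℝ)) / K) ^ K := by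
  set s : Finset (Fin (K + 3)) := univ \ {i, j}
  set t := ∑ p ∈ powersetCard 2 s, (colorDeg χ x p : ℝ)
  have hterm : ∀ m ∈ s, (embCount (K + 3) n (rainbowClique (K + 3)) χ m x : ℝ)
      ≤ colorDeg χ x {i, m} * colorDeg χ x {j, m} * (t / K) ^ K := by
    intro m hm
    have hsum : ∑ a ∈ s.erase m, (colorDeg χ x {m, a} : ℝ) ≤ t := by
      have := sum_powersetCard_two_insert (notMem_erase m s) fun p => (colorDeg χ x p : ℝ)
      rw [insert_erase hm] at this
      rw [show t = _ from this]
      exact le_add_of_nonneg_left (sum_nonneg fun _ _ => Nat.cast_nonneg _)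
    have hamgm := prod_le_mean_pow (s.erase m) (fun a => (colorDeg χ x {m, a} : ℝ))
      fun _ _ => Nat.cast_nonneg _
    rw [card_erase_of_mem hm, card_univ_sdiff_pair hij, Nat.add_sub_cancel] at hamgm
    calc (embCount (K + 3) n (rainbowClique (K + 3)) χ m x : ℝ)
        ≤ colorDeg χ x {m, i} * colorDeg χ x {m, j}
          * ∏ a ∈ s.erase m, (colorDeg χ x {m, a} : ℝ) := by
          exact_mod_cast embCount_rainbow_le_of_mem χ x hij hm
      _ ≤ colorDeg χ x {m, i} * colorDeg χ x {m, j} * (t / K) ^ K := by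
          gcongr
          exact hamgm.trans (by gcongr)
      _ = colorDeg χ x {i, m} * colorDeg χ x {j, m} * (t / K) ^ K := by
          rw [pair_comm m i, pair_comm m j]
  calc ∑ m ∈ s, (embCount (K + 3) n (rainbowClique (K + 3)) χ m x : ℝ)
      ≤ (∑ m ∈ s, (colorDeg χ x {i, m} : ℝ) * colorDeg χ x {j, m}) * (t / K) ^ K := by
        rw [sum_mul]
        exact sum_le_sum hterm
    _ ≤ _ := by
        gcongr
        rw [sum_mul_sum]
        exact sum_le_sum fun m hm => single_le_sum
          (f := fun b => (colorDeg χ x {i, m} : ℝ) * colorDeg χ x {j, b})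
          (fun _ _ => by positivity) hm

lemma vertDeg_rainbow_le (hij : i ≠ j) :
    (vertDeg (K + 3) n (rainbowClique (K + 3)) χ x : ℝ)
      ≤ colorDeg χ x {i, j}
          * (((∑ a ∈ univ \ {i, j}, (colorDeg χ x {i, a} : ℝ)) / (K + 1)) ^ (K + 1)
            + ((∑ a ∈ univ \ {i, j}, (colorDeg χ x {j, a} : ℝ)) / (K + 1)) ^ (K + 1))
        + (∑ a ∈ univ \ {i, j}, (colorDeg χ x {i, a} : ℝ))
          * (∑ a ∈ univ \ {i, j}, (colorDeg χ x {j, a} : ℝ))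
          * ((∑ p ∈ powersetCard 2 (univ \ {i, j}), (colorDeg χ x p : ℝ)) / K) ^ K := by
  have hi := embCount_rainbow_le_mean_pow χ x hij
  have hj := embCount_rainbow_le_mean_pow χ x hij.symm
  rw [pair_comm j i] at hj
  have hrest := sum_embCount_rainbow_le χ x hij
  calc (vertDeg (K + 3) n (rainbowClique (K + 3)) χ x : ℝ)
      ≤ ∑ m, (embCount (K + 3) n (rainbowClique (K + 3)) χ m x : ℝ) := by
        exact_mod_cast vertDeg_le_sum_embCount (rainbowClique (K + 3)) χ x
    _ = _ := by
        rw [univ_eq_insert_insert_sdiff_pair hij, sum_insert (by simp [hij]), sum_insert (by simp)]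
    _ ≤ _ := by linarith

end RainbowEstimates

theorem second_largest_neighborhood_general (k n : ℕ) (hk : 11 ≤ k)
    (χ : Fin n → Fin n → Finset (Fin k))
    (hdeg : ∀ x : Fin n,
      (n : ℝ) ^ (k - 1) / ((k : ℝ) ^ (k - 1) - 1) ≤ (vertDeg k n (rainbowClique k) χ x : ℝ)) :
    ∀ x : Fin n, ∀ i j : Fin k, i ≠ j →
      min ((Nset k n (rainbowClique k) χ i x).card : ℝ)
          ((Nset k n (rainbowClique k) χ j x).card : ℝ) ≤ (n : ℝ) / 2 := by
  intro x i j hij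
  obtain ⟨K, rfl⟩ : ∃ K, k = K + 3 := ⟨k - 3, by omega⟩
  by_contra! hmin
  obtain ⟨hNi, hNj⟩ := lt_min_iff.1 hmin
  have hbudget := sum_colorDeg_rainbow_le χ x hij
  have hi := card_Nset_rainbow_le χ x hij
  have hj := card_Nset_rainbow_le χ x hij.symm
  rw [pair_comm j i] at hj
  rify at hbudget hi hj
  simp only [show K + 3 - 1 = K + 2 from rfl, Nat.cast_add, Nat.cast_ofNat] at hdeg
  refine (hdeg x).not_gt ((vertDeg_rainbow_le χ x hij).trans_lt ?_)
  exact rainbow_estimate_lt (by omega) (Nat.cast_nonneg _)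
    (sum_nonneg fun _ _ => Nat.cast_nonneg _) (sum_nonneg fun _ _ => Nat.cast_nonneg _)
    (sum_nonneg fun _ _ => Nat.cast_nonneg _) hbudget (hNi.trans_le hi) (hNj.trans_le hj)

/-- the second largest neighborhood for the rainbow `k`-clique, `k ≥ 11`: if every
vertex has `d(x) ≥ n^{k−1}/(k^{k−1}−1)`, then for all distinct `i,j`,
`min(|N_i(x)|,|N_j(x)|) ≤ n/2`. -/
theorem second_largest_neighborhood (k n : ℕ) (hk : 11 ≤ k)
    (χ : Fin n → Fin n → Finset (Fin k)) (hχ : IsSym χ)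
    (hdeg : ∀ x : Fin n,
      (n : ℝ) ^ (k - 1) / ((k : ℝ) ^ (k - 1) - 1) ≤ (vertDeg k n (rainbowClique k) χ x : ℝ)) :
    ∀ x : Fin n, ∀ i j : Fin k, i ≠ j →
      min ((Nset k n (rainbowClique k) χ i x).card : ℝ)
          ((Nset k n (rainbowClique k) χ j x).card : ℝ) ≤ (n : ℝ) / 2 :=
  second_largest_neighborhood_general k n hk χ hdeg
end
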